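/- Let g : ℝ_max^n → ℝ_max, let a ∈ ℝ_max^{1×n} be a row vector, and let α > 0. If x ∈ ℝ_max^n satisfies d(g(x), a ⊗ x) ≤ α‖x‖, then g(x) ≤ max( log(1+√α) + (a ⊗ x), log(α+√α) + max_i x_i ), where the inequality and additions are taken in ℝ_max (so that a real number plus -∞ equals -∞). -/
import Mathlib


open Filter Topology

/-- `E(t) = e^t` for real `t`, and `E(-∞) = 0`. -/
noncomputable def E : WithBot ℝ → ℝ :=
  WithBot.recBotCoe 0 Real.exp

/-- The magnitude `‖x‖ = max_i E(x_i) = e^{max_i x_i}` of a tropical vector. -/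
noncomputable def tnorm {n : ℕ} (x : Fin n → WithBot ℝ) : ℝ :=
  E (Finset.univ.sup x)

/-- Tropical product of a row vector and a column vector: `a ⊗ x = max_j (a_j + x_j)`. -/
noncomputable def tdot {n : ℕ} (a x : Fin n → WithBot ℝ) : WithBot ℝ :=
  Finset.univ.sup fun j => a j + x j

/-- The tropical zero vector `ε = (-∞, …, -∞)ᵀ`. -/
def botVec (n : ℕ) : Fin n → WithBot ℝ := fun _ => ⊥

/-- The row vector `a` gives a tropical linear approximation of `g` at `ε`:
`d(g(x), a ⊗ x) / ‖x‖ → 0` as `x → ε`. -/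
def IsTropLinApprox {n : ℕ} (g : (Fin n → WithBot ℝ) → WithBot ℝ)
    (a : Fin n → WithBot ℝ) : Prop :=
  ∀ η : ℝ, 0 < η → ∃ δ : ℝ, 0 < δ ∧ ∀ x : Fin n → WithBot ℝ,
    0 < tnorm x → tnorm x < δ → |E (g x) - E (tdot a x)| ≤ η * tnorm x

/-- `lam` is a (tropical) eigenvalue of `A`. -/
def IsEigenvalue {n : ℕ} (A : Fin n → Fin n → WithBot ℝ) (lam : WithBot ℝ) : Prop :=
  ∃ x : Fin n → WithBot ℝ, x ≠ botVec n ∧ ∀ i, tdot (A i) x = lam + x i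

/-- A circuit (closed walk) of length `ℓ ≥ 1` in the weighted digraph `G(A)`. -/
def IsCircuit {n : ℕ} (A : Fin n → Fin n → WithBot ℝ) (ℓ : ℕ) (c : ℕ → Fin n) : Prop :=
  1 ≤ ℓ ∧ c ℓ = c 0 ∧ ∀ k < ℓ, A (c k) (c (k + 1)) ≠ ⊥

/-- The weight of a circuit: the sum of its edge weights. -/
noncomputable def circuitWeight {n : ℕ} (A : Fin n → Fin n → WithBot ℝ)
    (ℓ : ℕ) (c : ℕ → Fin n) : WithBot ℝ :=
  ∑ k ∈ Finset.range ℓ, A (c k) (c (k + 1))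

/-- Tropical matrix product. -/
noncomputable def tmul {n : ℕ} (A B : Fin n → Fin n → WithBot ℝ) :
    Fin n → Fin n → WithBot ℝ :=
  fun i j => Finset.univ.sup fun k => A i k + B k j

/-- Tropical matrix power; `A^{⊗0}` is the tropical identity matrix. -/
noncomputable def tpow {n : ℕ} (A : Fin n → Fin n → WithBot ℝ) :
    ℕ → Fin n → Fin n → WithBot ℝ
  | 0 => fun i j => if i = j then (0 : WithBot ℝ) else ⊥
  | k + 1 => tmul (tpow A k) A

/-- `G(A)` is strongly connected (i.e. `A` is irreducible). -/
def StronglyConnected {n : ℕ} (A : Fin n → Fin n → WithBot ℝ) : Prop :=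
  ∀ i j : Fin n, ∃ (ℓ : ℕ) (c : ℕ → Fin n),
    c 0 = i ∧ c ℓ = j ∧ ∀ k < ℓ, A (c k) (c (k + 1)) ≠ ⊥

/-- Stability of the fixed point `ε` of `x ↦ f(x)`. -/
def TropStable {n : ℕ} (f : (Fin n → WithBot ℝ) → (Fin n → WithBot ℝ)) : Prop :=
  ∀ α : ℝ, 0 < α → ∃ δ : ℝ, 0 < δ ∧
    ∀ x0 : Fin n → WithBot ℝ, tnorm x0 < δ → ∀ t : ℕ, tnorm (f^[t] x0) < α

/-- Asymptotic stability of the fixed point `ε` of `x ↦ f(x)`. -/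
def TropAsymptoticallyStable {n : ℕ}
    (f : (Fin n → WithBot ℝ) → (Fin n → WithBot ℝ)) : Prop :=
  TropStable f ∧ ∃ δ' : ℝ, 0 < δ' ∧ ∀ x0 : Fin n → WithBot ℝ, tnorm x0 < δ' →
    Filter.Tendsto (fun t : ℕ => tnorm (f^[t] x0)) Filter.atTop (nhds 0)


lemma E_nonneg (u : WithBot ℝ) : 0 ≤ E u := by
  cases u with
  | bot => simp [E]
  | coe t => exact (Real.exp_pos t).le

lemma le_of_E_le {u v : WithBot ℝ} (h : E u ≤ E v) : u ≤ v := by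
  cases u with
  | bot => exact bot_le
  | coe s =>
    cases v with
    | bot =>
      exfalso
      have : (0:ℝ) < E ((s : ℝ) : WithBot ℝ) := Real.exp_pos s
      have hb : E (⊥ : WithBot ℝ) = 0 := rfl
      rw [hb] at h; linarith
    | coe t => exact_mod_cast Real.exp_le_exp.mp h

lemma E_add_coe (c : ℝ) (v : WithBot ℝ) : E ((c : WithBot ℝ) + v) = Real.exp c * E v := by
  cases v with
  | bot => simp [E]
  | coe t =>
    show Real.exp (c + t) = Real.exp c * Real.exp t
    rw [Real.exp_add]

/-- Lemma on upper bound: if `d(g(x), a ⊗ x) ≤ α‖x‖` then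
`g(x) ≤ (log(1+√α) ⊗ a ⊗ x) ⊕ (log(α+√α) ⊗ 0 ⊗ x)`. -/
theorem stmt_1 {n : ℕ} (g : (Fin n → WithBot ℝ) → WithBot ℝ)
    (a : Fin n → WithBot ℝ) (α : ℝ) (hα : 0 < α) (x : Fin n → WithBot ℝ)
    (h : |E (g x) - E (tdot a x)| ≤ α * tnorm x) :
    g x ≤ max (((Real.log (1 + Real.sqrt α) : ℝ) : WithBot ℝ) + tdot a x)
      (((Real.log (α + Real.sqrt α) : ℝ) : WithBot ℝ) + Finset.univ.sup x) := by
  have hS : 0 ≤ E (Finset.univ.sup x) := E_nonneg _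
  have hA : 0 ≤ E (tdot a x) := E_nonneg _
  have hsq : 0 < Real.sqrt α := Real.sqrt_pos.mpr hα
  have h1 : E (g x) ≤ E (tdot a x) + α * E (Finset.univ.sup x) := by
    have h2 := (abs_le.mp h).2
    unfold tnorm at h2
    linarith
  rcases le_or_gt (Real.sqrt α * E (Finset.univ.sup x)) (E (tdot a x)) with hc | hc
  · refine le_max_of_le_left (le_of_E_le ?_)
    rw [E_add_coe, Real.exp_log (by positivity)]
    have h3 : Real.sqrt α * (Real.sqrt α * E (Finset.univ.sup x))
        ≤ Real.sqrt α * E (tdot a x) := mul_le_mul_of_nonneg_left hc hsq.le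
    have h4 : Real.sqrt α * Real.sqrt α = α := Real.mul_self_sqrt hα.le
    nlinarith
  · refine le_max_of_le_right (le_of_E_le ?_)
    rw [E_add_coe, Real.exp_log (by nlinarith : (0:ℝ) < α + Real.sqrt α)]
    nlinarith
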